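/- arXiv:0905.3703 — 2 statements merged into one kernel-verified Lean document; each statement's English description precedes it below -/
import Mathlib

section
/- Let K and C be compact convex sets in ℝⁿ with C d-decomposable, where 1 ≤ d ≤ n−1. Suppose that for each d-dimensional linear subspace ξ ⊆ ℝⁿ there exists w ∈ ξ such that K_ξ + w ⊆ C_ξ. Then there exists v ∈ ℝⁿ such that K + v ⊆ C. -/
open scoped Pointwise RealInnerProductSpace
noncomputable section

/-- Abbreviation for n-dimensional Euclidean space. -/
abbrev Euc (n : ℕ) := EuclideanSpace ℝ (Fin n)

/-- The translate K + v of a set K by a vector v. -/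
def transl {n : ℕ} (K : Set (Euc n)) (v : Euc n) : Set (Euc n) := (fun x => x + v) '' K

/-- Orthogonal projection of a set onto a subspace ξ, viewed inside the ambient space. -/
def projSet {n : ℕ} (ξ : Submodule ℝ (Euc n)) (K : Set (Euc n)) : Set (Euc n) :=
  (fun x => (ξ.orthogonalProjectionOnto x : Euc n)) '' K

/-- A simplicial family of size m+1: distinct unit vectors spanning an m-dimensional
subspace, some positive combination of which vanishes (the outer unit normals of an
m-dimensional simplex). -/
def SimplicialFamily {n : ℕ} (m : ℕ) (u : Fin (m + 1) → Euc n) : Prop :=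
  Function.Injective u ∧ (∀ i, ‖u i‖ = 1) ∧
    Module.finrank ℝ (Submodule.span ℝ (Set.range u)) = m ∧
    ∃ c : Fin (m + 1) → ℝ, (∀ i, 0 < c i) ∧ ∑ i, c i • u i = 0

/-- L is d-reliable: whenever every projection of L onto a d-dimensional subspace contains
a translate of the corresponding projection of a compact convex set K, L contains a
translate of K. -/
def DReliable {n : ℕ} (d : ℕ) (L : Set (Euc n)) : Prop :=
  ∀ K : Set (Euc n), IsCompact K → Convex ℝ K → K.Nonempty →
    (∀ ξ : Submodule ℝ (Euc n), Module.finrank ℝ ξ = d →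
      ∃ w, transl (projSet ξ K) w ⊆ projSet ξ L) →
    ∃ v, transl K v ⊆ L

/-- x is a regular boundary point of L: exactly one outer unit normal at x. -/
def IsRegularPoint {n : ℕ} (L : Set (Euc n)) (x : Euc n) : Prop :=
  x ∈ frontier L ∧ ∃! u : Euc n, ‖u‖ = 1 ∧ ∀ y ∈ L, ⟪y - x, u⟫ ≤ 0

/-- u is the (unique) outer unit normal to L at the regular boundary point x. -/
def IsNormalAtRegularPoint {n : ℕ} (L : Set (Euc n)) (x u : Euc n) : Prop :=
  x ∈ frontier L ∧ ‖u‖ = 1 ∧ (∀ y ∈ L, ⟪y - x, u⟫ ≤ 0) ∧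
    ∀ w : Euc n, ‖w‖ = 1 → (∀ y ∈ L, ⟪y - x, w⟫ ≤ 0) → w = u

/-- The support set of P in direction u. -/
def supportSet {n : ℕ} (P : Set (Euc n)) (u : Euc n) : Set (Euc n) :=
  {x ∈ P | ∀ y ∈ P, ⟪y, u⟫ ≤ ⟪x, u⟫}

/-- u is an outer unit facet normal of P: the support set of P in direction u is a face of
codimension 1 in the affine hull of P. -/
def IsFacetNormal {n : ℕ} (P : Set (Euc n)) (u : Euc n) : Prop :=
  ‖u‖ = 1 ∧ Module.finrank ℝ (vectorSpan ℝ (supportSet P u)) + 1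
      = Module.finrank ℝ (vectorSpan ℝ P)

/-- S is a k-dimensional simplex: the convex hull of k+1 affinely independent points. -/
def IsSimplexOfDim {n : ℕ} (k : ℕ) (S : Set (Euc n)) : Prop :=
  ∃ p : Fin (k + 1) → Euc n, AffineIndependent ℝ p ∧ S = convexHull ℝ (Set.range p)

/-- C is d-decomposable: a direct Minkowski sum of at least two nonempty compact convex
sets lying in complementary subspaces of dimension at most d. -/
def DDecomposable {n : ℕ} (d : ℕ) (C : Set (Euc n)) : Prop :=
  ∃ (m : ℕ) (ξ : Fin m → Submodule ℝ (Euc n)) (Cs : Fin m → Set (Euc n)),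
    2 ≤ m ∧ iSupIndep ξ ∧ (⨆ i, ξ i) = ⊤ ∧
    (∀ i, Module.finrank ℝ (ξ i) ≤ d) ∧
    (∀ i, (Cs i).Nonempty ∧ IsCompact (Cs i) ∧ Convex ℝ (Cs i) ∧ Cs i ⊆ (ξ i : Set (Euc n))) ∧
    C = ∑ i, Cs i

/-- C is a d-decomposable orthogonal simplex product: a direct Minkowski sum of simplices of
dimension at most d lying in mutually orthogonal complementary subspaces of dimension at
most d. -/
def OrthSimplexProduct {n : ℕ} (d : ℕ) (C : Set (Euc n)) : Prop :=
  ∃ (m : ℕ) (ξ : Fin m → Submodule ℝ (Euc n)) (Cs : Fin m → Set (Euc n)),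
    2 ≤ m ∧ iSupIndep ξ ∧ (⨆ i, ξ i) = ⊤ ∧
    (∀ i, Module.finrank ℝ (ξ i) ≤ d) ∧
    (∀ i j, i ≠ j → ∀ x ∈ ξ i, ∀ y ∈ ξ j, ⟪x, y⟫ = 0) ∧
    (∀ i, Cs i ⊆ (ξ i : Set (Euc n)) ∧ ∃ k ≤ d, IsSimplexOfDim k (Cs i)) ∧
    C = ∑ i, Cs i


/-!
Write `C = C₁ + ⋯ + C_m` with `C_i ⊆ ξ_i` and let `π_i` be the projection onto `ξ_i` along the
other summands, so that `y ∈ C` iff `π_i y ∈ C_i` for every `i`. The kernel of `π_i` has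
codimension `dim ξ_i ≤ d`, hence contains `Ξ_iᗮ` for some `d`-dimensional subspace `Ξ_i`, and then
`π_i` factors through the orthogonal projection onto `Ξ_i`. Applying `π_i` to
`K_{Ξ_i} + w_i ⊆ C_{Ξ_i}` gives `π_i K + π_i w_i ⊆ C_i`, so `v = ∑ π_i w_i` translates `K` into `C`.
-/

open Module Submodule LinearMap

section DirectSumProjection

variable {R E ι : Type*} [Ring R] [AddCommGroup E] [Module R E] {ξ : ι → Submodule R E}

theorem iSupIndep.isCompl_iSup_ne (hind : iSupIndep ξ) (htop : ⨆ i, ξ i = ⊤) (i : ι) :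
    IsCompl (ξ i) (⨆ j, ⨆ _ : j ≠ i, ξ j) := by
  refine ⟨hind i, codisjoint_iff.mpr (eq_top_iff.mpr (htop ▸ iSup_le fun j => ?_))⟩
  rcases eq_or_ne j i with rfl | hj
  · exact le_sup_left
  · exact le_sup_of_le_right (le_iSup₂_of_le (f := fun j (_ : j ≠ i) => ξ j) j hj le_rfl)

noncomputable def iSupIndep.proj (hind : iSupIndep ξ) (htop : ⨆ i, ξ i = ⊤) (i : ι) :
    E →ₗ[R] E :=
  (ξ i).projection _ (hind.isCompl_iSup_ne htop i)

namespace iSupIndep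

variable (hind : iSupIndep ξ) (htop : ⨆ i, ξ i = ⊤)

theorem proj_apply_mem (i : ι) (x : E) : hind.proj htop i x ∈ ξ i :=
  projection_apply_mem _ x

theorem proj_apply_of_mem {i : ι} {x : E} (hx : x ∈ ξ i) : hind.proj htop i x = x :=
  projection_apply_of_mem_left _ hx

theorem proj_apply_of_mem_of_ne {i j : ι} (hji : j ≠ i) {x : E} (hx : x ∈ ξ j) :
    hind.proj htop i x = 0 :=
  projection_apply_of_mem_right _ (le_iSup₂_of_le (f := fun j (_ : j ≠ i) => ξ j) j hji le_rfl hx)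

theorem ker_proj (i : ι) : ker (hind.proj htop i) = ⨆ j, ⨆ _ : j ≠ i, ξ j :=
  ker_projection _

variable [Fintype ι]

theorem proj_sum [DecidableEq ι] {g : ι → E} (hg : ∀ j, g j ∈ ξ j) (i : ι) :
    hind.proj htop i (∑ j, g j) = g i := by
  rw [map_sum, Finset.sum_eq_single i
    (fun j _ hji => hind.proj_apply_of_mem_of_ne htop hji (hg j))
    (fun h => absurd (Finset.mem_univ i) h), hind.proj_apply_of_mem htop (hg i)]

theorem sum_proj (x : E) : ∑ i, hind.proj htop i x = x := by
  classical
  refine iSup_induction ξ (motive := fun x => ∑ i, hind.proj htop i x = x) (htop ▸ mem_top)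
    (fun j y hy => ?_) (by simp) (fun y z hy hz => by simp [Finset.sum_add_distrib, hy, hz])
  rw [Finset.sum_eq_single j (fun i _ hij => hind.proj_apply_of_mem_of_ne htop hij.symm hy)
    (fun h => absurd (Finset.mem_univ j) h), hind.proj_apply_of_mem htop hy]

theorem mem_sum_iff {Cs : ι → Set E} (hCs : ∀ i, Cs i ⊆ ξ i) {y : E} :
    y ∈ ∑ i, Cs i ↔ ∀ i, hind.proj htop i y ∈ Cs i := by
  classical
  rw [Set.mem_fintype_sum]
  constructor
  · rintro ⟨g, hg, rfl⟩ i
    rw [hind.proj_sum htop fun j => hCs j (hg j)]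
    exact hg i
  · exact fun h => ⟨_, h, hind.sum_proj htop y⟩

theorem add_sum_proj_mem_sum {Cs : ι → Set E} (hCs : ∀ i, Cs i ⊆ ξ i) {x : E} {w : ι → E}
    (h : ∀ i, hind.proj htop i (x + w i) ∈ Cs i) :
    x + ∑ i, hind.proj htop i (w i) ∈ ∑ i, Cs i := by
  classical
  refine (hind.mem_sum_iff htop hCs).mpr fun i => ?_
  rw [map_add, hind.proj_sum htop (hind.proj_apply_mem htop · _), ← map_add]
  exact h i

end iSupIndep

end DirectSumProjection

section Orthogonal

variable {𝕜 E : Type*} [RCLike 𝕜] [NormedAddCommGroup E] [InnerProductSpace 𝕜 E]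

theorem Submodule.map_starProjection_of_orthogonal_le_ker {F : Type*} [AddCommGroup F]
    [Module 𝕜 F] (Ξ : Submodule 𝕜 E) [Ξ.HasOrthogonalProjection] {f : E →ₗ[𝕜] F}
    (hf : Ξᗮ ≤ ker f) (x : E) : f (Ξ.starProjection x) = f x := by
  have := hf (Ξ.sub_starProjection_mem_orthogonal x)
  rwa [mem_ker, map_sub, sub_eq_zero, eq_comm] at this

theorem Submodule.exists_finrank_eq_orthogonal_le [FiniteDimensional 𝕜 E] (S : Submodule 𝕜 E)
    {d : ℕ} (hS : finrank 𝕜 E ≤ finrank 𝕜 S + d) (hd : d ≤ finrank 𝕜 E) :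
    ∃ Ξ : Submodule 𝕜 E, finrank 𝕜 Ξ = d ∧ Ξᗮ ≤ S := by
  obtain ⟨b, hb⟩ := exists_linearIndependent_of_le_finrank (R := 𝕜) (M := S)
    (n := finrank 𝕜 E - d) (by omega)
  set T := span 𝕜 (Set.range (S.subtype ∘ b))
  have hT : finrank 𝕜 T = finrank 𝕜 E - d := by
    rw [finrank_span_eq_card (hb.map' _ S.ker_subtype), Fintype.card_fin]
  refine ⟨Tᗮ, ?_, ?_⟩
  · have := T.finrank_add_finrank_orthogonal
    omega
  · rw [orthogonal_orthogonal, span_le]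
    rintro _ ⟨i, rfl⟩
    exact (b i).2

end Orthogonal

theorem map_add_mem_image_of_transl_projSet_subset {n : ℕ} {F : Type*} [AddCommGroup F]
    [Module ℝ F] {Ξ : Submodule ℝ (Euc n)} {f : Euc n →ₗ[ℝ] F} (hf : Ξᗮ ≤ ker f)
    {K C : Set (Euc n)} {w : Euc n} (h : transl (projSet Ξ K) w ⊆ projSet Ξ C) {x : Euc n}
    (hx : x ∈ K) : f (x + w) ∈ f '' C := by
  obtain ⟨c, hc, hce⟩ := h ⟨_, ⟨x, hx, rfl⟩, rfl⟩
  refine ⟨c, hc, ?_⟩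
  have := congrArg f hce
  simp only [← starProjection_apply, map_add, Ξ.map_starProjection_of_orthogonal_le_ker hf] at this
  rw [this, map_add]

theorem decomposable_implies_reliable_general {n d : ℕ} (hdn : d ≤ n - 1)
    (K C : Set (Euc n))
    (hC : DDecomposable d C)
    (hcover : ∀ ξ : Submodule ℝ (Euc n), Module.finrank ℝ ξ = d →
      ∃ w ∈ ξ, transl (projSet ξ K) w ⊆ projSet ξ C) :
    ∃ v, transl K v ⊆ C := by
  obtain ⟨m, ξ, Cs, -, hind, htop, hdim, hCs, rfl⟩ := hC
  have hCξ (i : Fin m) : Cs i ⊆ ξ i := (hCs i).2.2.2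
  have hΞ (i : Fin m) :
      ∃ Ξ : Submodule ℝ (Euc n), finrank ℝ Ξ = d ∧ Ξᗮ ≤ ker (hind.proj htop i) := by
    have hcompl := finrank_add_eq_of_isCompl (hind.isCompl_iSup_ne htop i)
    have hn : finrank ℝ (Euc n) = n := finrank_euclideanSpace_fin
    rw [hind.ker_proj htop]
    exact exists_finrank_eq_orthogonal_le _ (by have := hdim i; omega) (by omega)
  choose Ξ hΞd hΞ using hΞ
  choose w _ hw using fun i => hcover (Ξ i) (hΞd i)
  refine ⟨∑ i, hind.proj htop i (w i), ?_⟩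
  rintro _ ⟨x, hx, rfl⟩
  refine hind.add_sum_proj_mem_sum htop hCξ fun i => ?_
  obtain ⟨c, hc, hce⟩ := map_add_mem_image_of_transl_projSet_subset (hΞ i) (hw i) hx
  exact hce ▸ (hind.mem_sum_iff htop hCξ).mp hc i

/-- If every projection of K onto a d-dimensional subspace can be translated into the
corresponding projection of a d-decomposable set C, then K can be translated into C. -/
theorem decomposable_implies_reliable {n d : ℕ} (hd1 : 1 ≤ d) (hdn : d ≤ n - 1)
    (K C : Set (Euc n))
    (hKc : IsCompact K) (hKv : Convex ℝ K) (hKne : K.Nonempty)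
    (hCc : IsCompact C) (hCv : Convex ℝ C) (hC : DDecomposable d C)
    (hcover : ∀ ξ : Submodule ℝ (Euc n), Module.finrank ℝ ξ = d →
      ∃ w ∈ ξ, transl (projSet ξ K) w ⊆ projSet ξ C) :
    ∃ v, transl K v ⊆ C :=
  decomposable_implies_reliable_general hdn K C hC hcover
end
end

section
/- Let A be a set of unit vectors in ℝⁿ with A = −A (symmetric under reflection through the origin), containing no simplicial family of size 4 or greater, and suppose the origin lies in the interior of the convex hull of A. Then there exists a direct sum decomposition ℝⁿ = W₁ ⊕ ⋯ ⊕ W_k into subspaces with dim W_i ≤ 2 for each i, such that A ⊆ W₁ ∪ ⋯ ∪ W_k. -/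
open scoped Pointwise RealInnerProductSpace
noncomputable section

/-!
Using `A = -A` to flip signs, a vector of `A` that is a combination, with all coefficients
nonzero, of `m ≥ 3` linearly independent vectors of `A` would yield a simplicial family of size
`m + 1` in `A`. So every circuit of `A` has at most three elements.

Since `0` is interior to the convex hull of `A`, `A` spans, so it contains a basis `B`. Call two
vectors of `B` linked if a vector of `A` is a combination of exactly these two. Links
`a — b — c` would give the four-element circuit `a, p a + q b, r b + s c, c`, so links form a
matching of `B`. The spans of the matched pairs and of the unmatched vectors are the `W i`: each
vector of `A` has at most two basis vectors in its support, and these are linked.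
-/

open Submodule Set

section Circuits

variable {K V : Type*} [Field K] [AddCommGroup V] [Module K V]

theorem LinearIndepOn.linearIndependent_fin_three {s : Set V} {a b c : V}
    (hs : LinearIndepOn K id s) (ha : a ∈ s) (hb : b ∈ s) (hc : c ∈ s) (hab : a ≠ b)
    (hac : a ≠ c) (hbc : b ≠ c) :
    LinearIndependent K ![a, b, c] := by
  have hinj : Function.Injective ![a, b, c] := by
    intro i j h
    fin_cases i <;> fin_cases j <;> simp_all [eq_comm]
  refine (linearIndepOn_id_range_iff hinj).1 (hs.mono ?_)
  rintro _ ⟨i, rfl⟩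
  fin_cases i <;> assumption

theorem LinearIndependent.fin_three_shear {a b c : V} (h : LinearIndependent K ![a, b, c])
    {p q : K} (hq : q ≠ 0) : LinearIndependent K ![a, p • a + q • b, c] := by
  rw [Fintype.linearIndependent_iff] at h ⊢
  intro g hg
  have h' := h ![g 0 + g 1 * p, g 1 * q, g 2] (by
    simp only [Fin.sum_univ_three, Matrix.cons_val] at hg ⊢
    linear_combination (norm := module) hg)
  have h1 : g 1 = 0 := by simpa [hq] using h' 1
  have h0 : g 0 = 0 := by simpa [h1] using h' 0
  have h2 : g 2 = 0 := by simpa using h' 2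
  intro i
  fin_cases i <;> assumption

theorem LinearIndependent.iSupIndep_span_fiber {ι κ : Type*} {v : ι → V}
    (hv : LinearIndependent K v) (f : ι → κ) :
    iSupIndep fun j => span K (v '' (f ⁻¹' {j})) := by
  intro j
  refine (hv.disjoint_span_image (s := f ⁻¹' {j}) (t := f ⁻¹' {j}ᶜ)
    (disjoint_compl_right.preimage f)).mono_right (iSup₂_le fun j' hj' => ?_)
  exact span_mono (image_mono (preimage_mono (singleton_subset_iff.2 hj')))

theorem iSup_span_fiber {ι κ : Type*} (v : ι → V) (f : ι → κ) :
    ⨆ j, span K (v '' (f ⁻¹' {j})) = span K (range v) := by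
  rw [← span_iUnion, ← image_iUnion, ← preimage_iUnion, iUnion_of_singleton, preimage_univ,
    image_univ]

variable (K) in
def NoLongCircuit (A : Set V) : Prop :=
  ∀ (m : ℕ) (g : Fin m → V) (c : Fin m → K), 3 ≤ m → LinearIndependent K g → (∀ i, g i ∈ A) →
    (∀ i, c i ≠ 0) → ∑ i, c i • g i ∉ A

variable (K) in
def Linked (A : Set V) (a b : V) : Prop :=
  ∃ p q : K, p ≠ 0 ∧ q ≠ 0 ∧ p • a + q • b ∈ A

variable {A B : Set V}

theorem Linked.symm {a b : V} (h : Linked K A a b) : Linked K A b a := by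
  obtain ⟨p, q, hp, hq, h⟩ := h
  exact ⟨q, p, hq, hp, by rwa [add_comm]⟩

theorem NoLongCircuit.not_linked_linked (hA : NoLongCircuit K A) {a b c : V}
    (hind : LinearIndependent K ![a, b, c]) (ha : a ∈ A) (hc : c ∈ A)
    (hab : Linked K A a b) (hbc : Linked K A b c) : False := by
  obtain ⟨p, q, hp, hq, hx⟩ := hab
  obtain ⟨r, s, hr, hs, hy⟩ := hbc
  -- `r • b + s • c = -(r * p / q) • a + (r / q) • (p • a + q • b) + s • c`
  refine hA 3 ![a, p • a + q • b, c] ![-(r * p / q), r / q, s] le_rfl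
    (hind.fin_three_shear hq) (fun i => by fin_cases i <;> assumption) ?_ ?_
  · intro i; fin_cases i <;> simp [hp, hq, hr, hs]
  · convert hy using 1
    simp only [Fin.sum_univ_three, Matrix.cons_val]
    match_scalars <;> field_simp; ring

theorem NoLongCircuit.exists_linked_of_mem_span (hA : NoLongCircuit K A)
    (hB : LinearIndepOn K id B) (hBA : B ⊆ A) {x : V} (hxA : x ∈ A) (hx0 : x ≠ 0)
    (hx : x ∈ span K B) : ∃ a ∈ B, ∃ b ∈ B, (a = b ∨ Linked K A a b) ∧ x ∈ span K {a, b} := by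
  classical
  rw [← image_id B, Finsupp.mem_span_image_iff_linearCombination] at hx
  obtain ⟨l, hlB, rfl⟩ := hx
  have htB : ↑l.support ⊆ B := hlB
  have hl : Finsupp.linearCombination K id l = ∑ a ∈ l.support, l a • a := rfl
  rw [hl] at hxA hx0 ⊢
  obtain h0 | h1 | h2 | h3 : l.support.card = 0 ∨ l.support.card = 1 ∨ l.support.card = 2 ∨
      3 ≤ l.support.card := by omega
  · simp [Finset.card_eq_zero.1 h0] at hx0
  · obtain ⟨a, ha⟩ := Finset.card_eq_one.1 h1
    have haB : a ∈ B := htB (by simp [ha])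
    exact ⟨a, haB, a, haB, Or.inl rfl, by simp [ha, mem_span_singleton]⟩
  · obtain ⟨a, b, hab, ht⟩ := Finset.card_eq_two.1 h2
    have hne : ∀ c ∈ l.support, l c ≠ 0 := fun c => Finsupp.mem_support_iff.1
    rw [ht, Finset.sum_pair hab] at hxA ⊢
    exact ⟨a, htB (by simp [ht]), b, htB (by simp [ht]),
      Or.inr ⟨l a, l b, hne a (by simp [ht]), hne b (by simp [ht]), hxA⟩,
      mem_span_pair.2 ⟨l a, l b, rfl⟩⟩
  · exfalso
    let e := l.support.equivFin.symm
    refine hA _ (fun i => e i) (fun i => l (e i)) h3 ?_ (fun i => hBA (htB (e i).2))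
      (fun i => Finsupp.mem_support_iff.1 (e i).2) ?_
    · exact (hB.mono htB).comp e e.injective
    · rwa [e.sum_comp (fun a => l a • (a : V)), Finset.sum_coe_sort l.support (fun a => l a • a)]

theorem NoLongCircuit.eq_or_eq_or_eq_of_linked (hA : NoLongCircuit K A)
    (hB : LinearIndepOn K id B) (hBA : B ⊆ A) {a b c : V} (ha : a ∈ B) (hb : b ∈ B)
    (hc : c ∈ B) (hab : Linked K A a b) (hbc : Linked K A b c) : a = b ∨ b = c ∨ a = c := by
  by_contra! h
  exact hA.not_linked_linked (hB.linearIndependent_fin_three ha hb hc h.1 h.2.2 h.2.1)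
    (hBA ha) (hBA hc) hab hbc

def NoLongCircuit.linkSetoid (hA : NoLongCircuit K A) (hB : LinearIndepOn K id B)
    (hBA : B ⊆ A) : Setoid B where
  r a b := (a : V) = b ∨ Linked K A a b
  iseqv := by
    refine ⟨fun _ => Or.inl rfl, fun h => h.imp Eq.symm Linked.symm, ?_⟩
    rintro a b c (hab | hab) (hbc | hbc)
    · exact Or.inl (hab.trans hbc)
    · exact Or.inr (hab ▸ hbc)
    · exact Or.inr (hbc ▸ hab)
    · rcases hA.eq_or_eq_or_eq_of_linked hB hBA a.2 b.2 c.2 hab hbc with h | h | h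
      · exact Or.inr (h ▸ hbc)
      · exact Or.inr (h ▸ hab)
      · exact Or.inl h

theorem NoLongCircuit.finrank_span_linkSetoid_class_le_two (hA : NoLongCircuit K A)
    (hB : LinearIndepOn K id B) (hBA : B ⊆ A) [Finite B] (q : Quotient (hA.linkSetoid hB hBA)) :
    Module.finrank K (span K (Subtype.val '' (Quotient.mk _ ⁻¹' {q}))) ≤ 2 := by
  classical
  have := Fintype.ofFinite B
  set F := Quotient.mk (hA.linkSetoid hB hBA) ⁻¹' {q}
  have hlinked : ∀ x ∈ F, ∀ y ∈ F, x ≠ y → Linked K A x y := fun x hx y hy hxy =>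
    (Quotient.exact (hx.trans hy.symm)).resolve_left (Subtype.coe_ne_coe.2 hxy)
  have hF : F.ncard ≤ 2 := by
    by_contra! h
    obtain ⟨x, y, z, hx, hy, hz, hxy, hxz, hyz⟩ := (two_lt_ncard_iff (toFinite F)).1 h
    rcases hA.eq_or_eq_or_eq_of_linked hB hBA x.2 y.2 z.2 (hlinked x hx y hy hxy)
      (hlinked y hy z hz hyz) with h | h | h
    exacts [hxy (Subtype.ext h), hyz (Subtype.ext h), hxz (Subtype.ext h)]
  calc Module.finrank K (span K (Subtype.val '' F))
      ≤ (Subtype.val '' F).toFinset.card := finrank_span_le_card _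
    _ = (Subtype.val '' F).ncard := (ncard_eq_toFinset_card' _).symm
    _ ≤ F.ncard := ncard_image_le
    _ ≤ 2 := hF

theorem NoLongCircuit.exists_decomposition [FiniteDimensional K V] (hA : NoLongCircuit K A)
    (h0 : (0 : V) ∉ A) (hspan : span K A = ⊤) :
    ∃ (k : ℕ) (W : Fin k → Submodule K V),
      iSupIndep W ∧ (⨆ i, W i) = ⊤ ∧ (∀ i, Module.finrank K (W i) ≤ 2) ∧
      A ⊆ ⋃ i, (W i : Set V) := by
  obtain ⟨B, hBA, hBspan, hB⟩ := exists_linearIndependent K A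
  have : Finite B := hB.finite
  set S := hA.linkSetoid hB hBA
  let W : Quotient S → Submodule K V := fun q => span K (Subtype.val '' (Quotient.mk S ⁻¹' {q}))
  let e : Fin (Nat.card (Quotient S)) ≃ Quotient S := (Finite.equivFin _).symm
  refine ⟨_, W ∘ e, (hB.iSupIndep_span_fiber _).comp e.injective, ?_,
    fun i => hA.finrank_span_linkSetoid_class_le_two hB hBA (e i), fun x hx => ?_⟩
  · rw [Function.comp_def, e.iSup_comp, iSup_span_fiber, Subtype.range_coe, hBspan, hspan]
  obtain ⟨a, ha, b, hb, hab, hxab⟩ := hA.exists_linked_of_mem_span hB hBA hx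
    (ne_of_mem_of_not_mem hx h0) (hBspan ▸ subset_span hx)
  have hab' : ({a, b} : Set V) ⊆ Subtype.val '' (Quotient.mk S ⁻¹' {Quotient.mk S ⟨a, ha⟩}) :=
    pair_subset_iff.2 ⟨⟨⟨a, ha⟩, rfl, rfl⟩,
      ⟨⟨b, hb⟩, (Quotient.sound (s := S) (a := ⟨a, ha⟩) (b := ⟨b, hb⟩) hab).symm, rfl⟩⟩
  refine mem_iUnion.2 ⟨e.symm (Quotient.mk S ⟨a, ha⟩), ?_⟩
  rw [Function.comp_apply, e.apply_symm_apply]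
  exact span_mono hab' hxab

end Circuits

theorem simplicialFamily_cons {n m : ℕ} {x : Euc n} {g : Fin m → Euc n} {c : Fin m → ℝ}
    (hg : LinearIndependent ℝ g) (hx : ‖x‖ = 1) (hgn : ∀ i, ‖g i‖ = 1) (hc : ∀ i, 0 < c i)
    (hsum : x + ∑ i, c i • g i = 0) : SimplicialFamily m (Fin.cons x g : Fin (m + 1) → Euc n) := by
  have hxg : x ∈ span ℝ (range g) := by
    rw [eq_neg_of_add_eq_zero_left hsum]
    exact neg_mem (sum_mem fun i _ => smul_mem _ _ (subset_span (mem_range_self i)))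
  refine ⟨Fin.cons_injective_iff.2 ⟨?_, hg.injective⟩, Fin.forall_fin_succ.2 ⟨hx, hgn⟩, ?_,
    Fin.cons 1 c, Fin.forall_fin_succ.2 ⟨one_pos, hc⟩, by simpa [Fin.sum_univ_succ] using hsum⟩
  · rintro ⟨j, rfl⟩
    have := Fintype.linearIndependent_iff.1 hg (fun i => c i + if i = j then 1 else 0) (by
      simpa [add_smul, Finset.sum_add_distrib, ite_smul, add_comm] using hsum) j
    linarith [hc j, (by simpa using this : c j + 1 = 0)]
  · rw [Fin.range_cons, span_insert_eq_span hxg, finrank_span_eq_card hg, Fintype.card_fin]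

theorem noLongCircuit_of_forall_not_simplicialFamily {n : ℕ} {A : Set (Euc n)}
    (hunit : ∀ u ∈ A, ‖u‖ = 1) (hsymm : A = -A)
    (hnosimp : ∀ (k : ℕ) (v : Fin (k + 1) → Euc n), 3 ≤ k →
      (∀ i, v i ∈ A) → ¬ SimplicialFamily k v) :
    NoLongCircuit ℝ A := by
  intro m g c hm hg hgA hc hxA
  let ε : Fin m → ℝˣ := fun i => if 0 < c i then -1 else 1
  have hεA : ∀ i, (ε • g) i ∈ A := by
    intro i
    by_cases h : 0 < c i
    · rw [hsymm] at hgA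
      simpa [ε, h] using hgA i
    · simpa [ε, h] using hgA i
  refine hnosimp m _ hm (Fin.forall_fin_succ.2 ⟨hxA, hεA⟩) (simplicialFamily_cons
    (hg.units_smul ε) (hunit _ hxA) (fun i => hunit _ (hεA i)) (c := fun i => |c i|)
    (fun i => abs_pos.2 (hc i)) ?_)
  rw [← Finset.sum_add_distrib]
  refine Finset.sum_eq_zero fun i _ => ?_
  by_cases h : 0 < c i
  · simp [ε, h, abs_of_pos h]
  · simp [ε, h, abs_of_neg (lt_of_le_of_ne (not_lt.1 h) (hc i))]

/-- If a centrally symmetric set A of unit vectors contains no simplicial family of size 4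
or greater, and the origin lies in the interior of the convex hull of A, then ℝⁿ decomposes
as a direct sum of subspaces W₁, …, W_k of dimension at most 2 with
A ⊆ W₁ ∪ ⋯ ∪ W_k. -/
theorem no_simplicial_four_decomposition {n : ℕ} (A : Set (Euc n))
    (hunit : ∀ u ∈ A, ‖u‖ = 1) (hsymm : A = -A)
    (hnosimp : ∀ (k : ℕ) (v : Fin (k + 1) → Euc n), 3 ≤ k →
      (∀ i, v i ∈ A) → ¬ SimplicialFamily k v)
    (hint : (0 : Euc n) ∈ interior (convexHull ℝ A)) :
    ∃ (k : ℕ) (W : Fin k → Submodule ℝ (Euc n)),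
      iSupIndep W ∧ (⨆ i, W i) = ⊤ ∧ (∀ i, Module.finrank ℝ (W i) ≤ 2) ∧
      A ⊆ ⋃ i, (W i : Set (Euc n)) := by
  have h0 : (0 : Euc n) ∉ A := fun h => by simpa using hunit 0 h
  have hspan : span ℝ A = ⊤ := (span ℝ A).eq_top_of_nonempty_interior'
    ⟨0, interior_mono (convexHull_min subset_span (span ℝ A).convex) hint⟩
  exact (noLongCircuit_of_forall_not_simplicialFamily hunit hsymm hnosimp).exists_decomposition
    h0 hspan
end
end
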